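/- Let (p,p') be a pair of coprime positive integers with p ≥ 2, set a = p'/p, and let ε,ε' ∈ {0,1}. For all λ = (r,s;θ) and λ' = (r',s';θ') in 𝒮_{p,p'} one has the symmetry S^{aa,(ε,ε')}_{λ,λ'} = S^{aa,(ε',ε)}_{λ',λ}, and the unitarity Σ_{λ''∈𝒮_{p,p'}} S^{aa,(ε,ε')}_{λ,λ''} · conj( S^{aa,(ε',ε)}_{λ'',λ'} ) = 1 if λ = λ' and = 0 otherwise, where conj denotes complex conjugation. -/

import Mathlib

open Complex
open scoped Real

noncomputable section

/-- The set of discrete spectra 𝒮_{p,p'} (as a set of triples (r,s,θ)). -/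
def SpectraSet (p p' : ℤ) : Set (ℤ × ℤ × ℤ) :=
  {x | 1 ≤ x.1 ∧ x.1 ≤ p - 1 ∧ 0 ≤ x.2.1 ∧ x.2.1 ≤ p' - 1 ∧
    ∃ m : ℤ, 0 ≤ m ∧ m ≤ p - 1 ∧
      2 * m + 2 * p' - p = 2 * (x.1 - 2 * x.2.2) * p' - (2 * x.2.1 + 1) * p}

/-- Atypical-atypical modular S-data. -/
noncomputable def Saa (p p' : ℤ) (ε ε' : ℕ) (x y : ℤ × ℤ × ℤ) : ℂ :=
  Complex.I ^ (-((ε : ℤ) * ε')) *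
    (-1 : ℂ) ^ ((1 - (ε' : ℤ)) * x.2.1 + (1 - (ε : ℤ)) * y.2.1) * (2 / (p : ℂ)) *
    (Real.sin (π * ((p' : ℝ) / p) * x.1 * y.1) : ℂ) *
    Complex.exp ((π : ℂ) * Complex.I * ((p' : ℂ) / p) *
      ((x.1 : ℂ) - 2 * x.2.2 - 1 + ε) * ((y.1 : ℂ) - 2 * y.2.2 - 1 + ε'))

/-! The summand `S_{x,z} · conj S_{z,y}` depends on `z = (r,s;θ)` only through `r` and
`t = r - 2θ - 1`, and `z ↦ (r,t)` is a bijection from `𝒮_{p,p'}` onto the pairs `1 ≤ r < p`,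
`0 ≤ t < p` with `r + t` odd. Writing the parity constraint as `(1 - (-1)^(r+t))/2` splits the sum
into products of a sum over `r` of `sin · sin`, i.e. a difference of cosine sums, and a geometric
sum over `t`. Both are sums of powers of `ω^n`, `ω = e^{πi/p}`, over a half period, so they are
`p`, `0` or (paired with the conjugate sum) `2` according as `2p ∣ n`, `n` is even or `n` is odd.
Coprimality of `p` and `p'` then kills every product except the diagonal one. -/

open Finset ComplexConjugate

theorem geom_sum_eq_zero_of_pow_eq_one {K : Type*} [Field K] {w : K} {n : ℕ}
    (hw : w ≠ 1) (h : w ^ n = 1) : ∑ i ∈ range n, w ^ i = 0 := by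
  rw [geom_sum_eq hw, h, sub_self, zero_div]

theorem geom_sum_add_geom_sum_inv_of_pow_eq_neg_one {K : Type*} [Field K] [NeZero (2 : K)]
    {w : K} {n : ℕ} (h : w ^ n = -1) :
    ∑ i ∈ range n, w ^ i + ∑ i ∈ range n, w⁻¹ ^ i = 2 := by
  have h2 : (1 : K) ≠ -1 := fun h => two_ne_zero (α := K) (by linear_combination h)
  have hn : n ≠ 0 := by
    rintro rfl
    exact h2 (by simpa using h)
  have hw0 : w ≠ 0 := by
    rintro rfl
    simp [zero_pow hn] at h
  have hw : w ≠ 1 := by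
    rintro rfl
    exact h2 (by simpa using h)
  have hw' : w⁻¹ ≠ 1 := by rwa [ne_eq, inv_eq_one]
  have hsub : w - 1 ≠ 0 := sub_ne_zero.2 hw
  rw [geom_sum_eq hw, geom_sum_eq hw', inv_pow, h]
  field_simp
  ring

theorem Int.sum_Ico_zero_zpow {K : Type*} [DivisionRing K] (w : K) (p : ℤ) :
    ∑ r ∈ Ico 0 p, w ^ r = ∑ i ∈ Finset.range p.toNat, w ^ i := by
  simp [Int.Ico_eq_finset_map]

theorem Int.sum_Ico_one_eq_sum_Ico_zero {M : Type*} [AddCommMonoid M] {f : ℤ → M} (hf : f 0 = 0)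
    (p : ℤ) : ∑ r ∈ Ico 1 p, f r = ∑ r ∈ Ico 0 p, f r :=
  sum_subset (Ico_subset_Ico_left zero_le_one) fun r hr hr' => by
    obtain rfl : r = 0 := by simp only [mem_Ico] at hr hr'; omega
    exact hf

theorem two_mul_sum_filter_odd {K : Type*} [Field K] (s t : Finset ℤ) (A B : ℤ → K) :
    2 * ∑ q ∈ (s ×ˢ t).filter (fun q => Odd (q.1 + q.2)), A q.1 * B q.2 =
      (∑ r ∈ s, A r) * (∑ r ∈ t, B r) -
        (∑ r ∈ s, (-1) ^ r * A r) * (∑ r ∈ t, (-1) ^ r * B r) := by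
  rw [sum_mul_sum, sum_mul_sum, ← sum_product', ← sum_product', ← sum_sub_distrib, sum_filter,
    mul_sum]
  refine sum_congr rfl fun q _ => ?_
  have hsign : (-1 : K) ^ q.1 * A q.1 * ((-1) ^ q.2 * B q.2) =
      (-1) ^ (q.1 + q.2) * (A q.1 * B q.2) := by
    rw [zpow_add₀ (neg_ne_zero.2 one_ne_zero)]
    ring
  rw [hsign]
  rcases Int.even_or_odd (q.1 + q.2) with h | h
  · simp [h.neg_one_zpow, Int.not_odd_iff_even.2 h]
  · rw [if_pos h, h.neg_one_zpow]
    ring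

namespace IsCoprime

variable {p p' : ℤ}

theorem two_mul_dvd_mul_iff_eq_zero (hco : IsCoprime p p') {D : ℤ} (hD : |D| < p) :
    2 * p ∣ p' * D ↔ D = 0 := by
  refine ⟨fun h => Int.eq_zero_of_abs_lt_dvd ?_ hD, fun h => by simp [h]⟩
  exact hco.dvd_of_dvd_mul_left (dvd_trans (dvd_mul_left p 2) h)

theorem not_two_mul_dvd_mul_add_self (hco : IsCoprime p p') {D : ℤ} (hD : |D| < p) :
    ¬ 2 * p ∣ p' * D + p := by
  intro h
  have hD0 : D = 0 := by
    refine Int.eq_zero_of_abs_lt_dvd (hco.dvd_of_dvd_mul_left ?_) hD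
    exact (dvd_add_left (dvd_refl p)).1 (dvd_trans (dvd_mul_left p 2) h)
  have hp : 0 < p := lt_of_le_of_lt (abs_nonneg D) hD
  rw [hD0, mul_zero, zero_add] at h
  linarith [Int.le_of_dvd hp h]

theorem not_two_mul_dvd_mul_of_even (hco : IsCoprime p p') {n : ℤ} (hn0 : 0 < n)
    (hn : n < 2 * p) (he : Even n) : ¬ 2 * p ∣ p' * n := by
  intro h
  obtain ⟨k, rfl⟩ : p ∣ n := hco.dvd_of_dvd_mul_left (dvd_trans (dvd_mul_left p 2) h)
  have hp : 0 < p := by linarith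
  obtain rfl : k = 1 := by
    have : 0 < k := pos_of_mul_pos_right hn0 hp.le
    nlinarith
  rw [mul_one] at h he
  have h2p' : 2 ∣ p' := (mul_dvd_mul_iff_right hp.ne').1 h
  have h2 := hco.isUnit_of_dvd' (even_iff_two_dvd.1 he) h2p'
  norm_num [Int.isUnit_iff] at h2

end IsCoprime

namespace Saa

def ω (p : ℤ) : ℂ := exp (π * I / p)

def rootSum (p n : ℤ) : ℂ := ∑ r ∈ Ico 0 p, ω p ^ (n * r)

def cosSum (p n : ℤ) : ℝ := ∑ r ∈ Ico 0 p, Real.cos (π * n * r / p)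

def tIndex (x : ℤ × ℤ × ℤ) : ℤ := x.1 - 2 * x.2.2 - 1

def oddPairs (p : ℤ) : Finset (ℤ × ℤ) := (Ico 1 p ×ˢ Ico 0 p).filter fun q => Odd (q.1 + q.2)

def unitarityTerm (p p' u v e D : ℤ) (q : ℤ × ℤ) : ℂ :=
  ((Real.sin (π * ((p' : ℝ) / p) * u * q.1) * Real.sin (π * ((p' : ℝ) / p) * q.1 * v) : ℝ) : ℂ) *
    ω p ^ ((q.2 + e) * (p' * D))

variable {p p' : ℤ}

theorem ω_ne_zero : ω p ≠ 0 := exp_ne_zero _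

theorem ω_zpow (n : ℤ) : ω p ^ n = exp (π * I * n / p) := by
  rw [ω, ← exp_int_mul]
  ring_nf

theorem ω_zpow_eq_one_iff (hp : p ≠ 0) {n : ℤ} : ω p ^ n = 1 ↔ 2 * p ∣ n := by
  have hp' : (p : ℂ) ≠ 0 := Int.cast_ne_zero.2 hp
  rw [ω_zpow, exp_eq_one_iff]
  constructor
  · rintro ⟨k, hk⟩
    refine ⟨k, Int.cast_injective (α := ℂ) ?_⟩
    push_cast
    field_simp at hk
    linear_combination hk
  · rintro ⟨k, rfl⟩
    exact ⟨k, by push_cast; field_simp⟩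

theorem ω_zpow_self (hp : p ≠ 0) : ω p ^ p = -1 := by
  have hp' : (p : ℂ) ≠ 0 := Int.cast_ne_zero.2 hp
  rw [ω_zpow, mul_div_assoc, div_self hp', mul_one, exp_pi_mul_I]

theorem ω_zpow_pow_toNat (hp : 0 < p) (n : ℤ) : (ω p ^ n) ^ p.toNat = (-1) ^ n := by
  rw [← zpow_natCast, Int.toNat_of_nonneg hp.le, ← zpow_mul, mul_comm, zpow_mul,
    ω_zpow_self hp.ne']

theorem rootSum_eq_geom_sum (n : ℤ) :
    rootSum p n = ∑ i ∈ range p.toNat, (ω p ^ n) ^ i := by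
  simp_rw [rootSum, zpow_mul, Int.sum_Ico_zero_zpow]

theorem rootSum_of_even (hp : 0 < p) {n : ℤ} (hn : Even n) :
    rootSum p n = if 2 * p ∣ n then (p : ℂ) else 0 := by
  rw [rootSum_eq_geom_sum]
  split_ifs with h
  · simp only [(ω_zpow_eq_one_iff hp.ne').2 h, one_pow, sum_const, card_range, nsmul_eq_mul,
      mul_one]
    exact_mod_cast Int.toNat_of_nonneg hp.le
  · refine geom_sum_eq_zero_of_pow_eq_one (mt (ω_zpow_eq_one_iff hp.ne').1 h) ?_
    rw [ω_zpow_pow_toNat hp, hn.neg_one_zpow]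

theorem rootSum_add_rootSum_neg (hp : 0 < p) {n : ℤ} (hn : Odd n) :
    rootSum p n + rootSum p (-n) = 2 := by
  rw [rootSum_eq_geom_sum, rootSum_eq_geom_sum, zpow_neg]
  refine geom_sum_add_geom_sum_inv_of_pow_eq_neg_one ?_
  rw [ω_zpow_pow_toNat hp, hn.neg_one_zpow]

theorem cosSum_eq_rootSum (n : ℤ) :
    (cosSum p n : ℂ) = (rootSum p n + rootSum p (-n)) / 2 := by
  simp only [cosSum, rootSum, ω_zpow, ofReal_sum, ofReal_cos, cos, ← sum_add_distrib, sum_div]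
  refine sum_congr rfl fun r _ => ?_
  push_cast
  ring_nf

theorem cosSum_of_even (hp : 0 < p) {n : ℤ} (hn : Even n) :
    cosSum p n = if 2 * p ∣ n then (p : ℝ) else 0 := by
  apply ofReal_injective
  rw [cosSum_eq_rootSum, rootSum_of_even hp hn, rootSum_of_even hp hn.neg]
  simp only [dvd_neg]
  split_ifs <;> push_cast <;> ring

theorem cosSum_of_odd (hp : 0 < p) {n : ℤ} (hn : Odd n) : cosSum p n = 1 := by
  apply ofReal_injective
  rw [cosSum_eq_rootSum, rootSum_add_rootSum_neg hp hn]
  norm_num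

theorem sin_mul_sin_eq (p' u v r : ℤ) :
    Real.sin (π * ((p' : ℝ) / p) * u * r) * Real.sin (π * ((p' : ℝ) / p) * r * v) =
      (Real.cos (π * (p' * (u - v) : ℤ) * r / p) -
        Real.cos (π * (p' * (u + v) : ℤ) * r / p)) / 2 := by
  rw [eq_div_iff two_ne_zero, mul_comm, ← mul_assoc, Real.two_mul_sin_mul_sin]
  push_cast
  ring_nf

theorem neg_one_zpow_mul_cos (hp : p ≠ 0) (n r : ℤ) :
    (-1) ^ r * Real.cos (π * n * r / p) = Real.cos (π * (n + p : ℤ) * r / p) := by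
  have hp' : (p : ℝ) ≠ 0 := Int.cast_ne_zero.2 hp
  rw [← Real.cos_add_int_mul_pi]
  congr 1
  push_cast
  field_simp

theorem sum_sin_mul_sin (p' u v : ℤ) :
    ∑ r ∈ Ico 1 p, Real.sin (π * ((p' : ℝ) / p) * u * r) * Real.sin (π * ((p' : ℝ) / p) * r * v) =
      (cosSum p (p' * (u - v)) - cosSum p (p' * (u + v))) / 2 := by
  rw [Int.sum_Ico_one_eq_sum_Ico_zero (by simp), cosSum, cosSum, ← sum_sub_distrib, sum_div]
  exact sum_congr rfl fun r _ => sin_mul_sin_eq p' u v r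

theorem sum_neg_one_zpow_mul_sin_mul_sin (hp : p ≠ 0) (p' u v : ℤ) :
    ∑ r ∈ Ico 1 p, (-1) ^ r *
        (Real.sin (π * ((p' : ℝ) / p) * u * r) * Real.sin (π * ((p' : ℝ) / p) * r * v)) =
      (cosSum p (p' * (u - v) + p) - cosSum p (p' * (u + v) + p)) / 2 := by
  rw [Int.sum_Ico_one_eq_sum_Ico_zero (by simp), cosSum, cosSum, ← sum_sub_distrib, sum_div]
  refine sum_congr rfl fun r _ => ?_
  rw [sin_mul_sin_eq, mul_div_assoc', mul_sub, neg_one_zpow_mul_cos hp,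
    neg_one_zpow_mul_cos hp]

theorem sum_ω_zpow (e n : ℤ) :
    ∑ t ∈ Ico 0 p, ω p ^ ((t + e) * n) = ω p ^ (e * n) * rootSum p n := by
  rw [rootSum, mul_sum]
  refine sum_congr rfl fun t _ => ?_
  rw [← zpow_add₀ ω_ne_zero]
  ring_nf

theorem sum_neg_one_zpow_mul_ω_zpow (hp : p ≠ 0) (e n : ℤ) :
    ∑ t ∈ Ico 0 p, (-1) ^ t * ω p ^ ((t + e) * n) = ω p ^ (e * n) * rootSum p (n + p) := by
  rw [rootSum, mul_sum]
  refine sum_congr rfl fun t _ => ?_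
  rw [← ω_zpow_self hp, ← zpow_mul, ← zpow_add₀ ω_ne_zero, ← zpow_add₀ ω_ne_zero]
  ring_nf

theorem cosSum_sub_mul_rootSum (hco : IsCoprime p p') {u v D : ℤ} (hu : u ∈ Ico 1 p)
    (hv : v ∈ Ico 1 p) (hD : |D| < p) (hpar : Even (u + v + D)) :
    (cosSum p (p' * (u - v)) - cosSum p (p' * (u + v))) * rootSum p (p' * D) =
      if u = v ∧ D = 0 then (p : ℂ) ^ 2 else 0 := by
  rw [mem_Ico] at hu hv
  have hp : 0 < p := by omega
  rcases Int.even_or_odd (p' * D) with hd | hd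
  · rw [rootSum_of_even hp hd]
    by_cases hD0 : D = 0
    · subst hD0
      have huv : Even (u + v) := by simpa using hpar
      have huv' : Even (u - v) := by rw [Int.even_iff] at huv ⊢; omega
      rw [if_pos (by simp), cosSum_of_even hp (huv'.mul_left p'),
        cosSum_of_even hp (huv.mul_left p'),
        if_neg (hco.not_two_mul_dvd_mul_of_even (by omega) (by omega) huv)]
      simp only [hco.two_mul_dvd_mul_iff_eq_zero (abs_lt.2 ⟨by omega, by omega⟩ : |u - v| < p),
        sub_eq_zero, and_true]
      split_ifs <;> push_cast <;> ring
    · rw [if_neg (mt (hco.two_mul_dvd_mul_iff_eq_zero hD).1 hD0), if_neg (fun h => hD0 h.2),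
        mul_zero]
  · obtain ⟨hp', hDo⟩ := Int.odd_mul.1 hd
    have hodd : ∀ w, Even (w - D) → Odd (p' * w) := fun w hw =>
      Int.odd_mul.2 ⟨hp', by rw [Int.even_iff] at hw; rw [Int.odd_iff] at hDo ⊢; omega⟩
    rw [Int.even_iff] at hpar
    rw [cosSum_of_odd hp (hodd _ (by rw [Int.even_iff]; omega)),
      cosSum_of_odd hp (hodd _ (by rw [Int.even_iff]; omega)),
      if_neg (by rintro ⟨-, rfl⟩; simp at hDo)]
    simp

theorem cosSum_add_sub_mul_rootSum (hco : IsCoprime p p') {u v D : ℤ} (hD : |D| < p)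
    (hpar : Even (u + v + D)) :
    (cosSum p (p' * (u - v) + p) - cosSum p (p' * (u + v) + p)) * rootSum p (p' * D + p) = 0 := by
  have hp : 0 < p := lt_of_le_of_lt (abs_nonneg D) hD
  rcases Int.even_or_odd (p' * D + p) with hd | hd
  · rw [rootSum_of_even hp hd, if_neg (hco.not_two_mul_dvd_mul_add_self hD), mul_zero]
  · have hodd : ∀ w, Even (w - D) → Odd (p' * w + p) := fun w hw => by
      rw [show p' * w + p = p' * D + p + p' * (w - D) by ring]
      exact hd.add_even (hw.mul_left p')
    rw [Int.even_iff] at hpar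
    rw [cosSum_of_odd hp (hodd _ (by rw [Int.even_iff]; omega)),
      cosSum_of_odd hp (hodd _ (by rw [Int.even_iff]; omega))]
    simp

theorem sum_oddPairs_unitarityTerm (hco : IsCoprime p p') {u v D : ℤ}
    (hu : u ∈ Ico 1 p) (hv : v ∈ Ico 1 p) (hD : |D| < p) (hpar : Even (u + v + D)) (e : ℤ) :
    ∑ q ∈ oddPairs p, unitarityTerm p p' u v e D q =
      if u = v ∧ D = 0 then (p : ℂ) ^ 2 / 4 else 0 := by
  have hp : p ≠ 0 := by rw [mem_Ico] at hu; omega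
  have hsum := two_mul_sum_filter_odd (Ico 1 p) (Ico 0 p)
    (fun r => ((Real.sin (π * ((p' : ℝ) / p) * u * r) *
      Real.sin (π * ((p' : ℝ) / p) * r * v) : ℝ) : ℂ))
    (fun t => ω p ^ ((t + e) * (p' * D)))
  have hr : ∑ r ∈ Ico 1 p, ((Real.sin (π * ((p' : ℝ) / p) * u * r) *
      Real.sin (π * ((p' : ℝ) / p) * r * v) : ℝ) : ℂ) =
      (cosSum p (p' * (u - v)) - cosSum p (p' * (u + v))) / 2 := by
    simp only [← ofReal_sum, sum_sin_mul_sin]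
    push_cast
    rfl
  have hr' : ∑ r ∈ Ico 1 p, (-1) ^ r * ((Real.sin (π * ((p' : ℝ) / p) * u * r) *
      Real.sin (π * ((p' : ℝ) / p) * r * v) : ℝ) : ℂ) =
      (cosSum p (p' * (u - v) + p) - cosSum p (p' * (u + v) + p)) / 2 := by
    rw [← ofReal_one, ← ofReal_neg]
    simp only [← ofReal_zpow, ← ofReal_mul, ← ofReal_sum, sum_neg_one_zpow_mul_sin_mul_sin hp]
    push_cast
    rfl
  rw [hr, hr', sum_ω_zpow, sum_neg_one_zpow_mul_ω_zpow hp] at hsum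
  have h₁ := cosSum_sub_mul_rootSum hco hu hv hD hpar
  have h₂ := cosSum_add_sub_mul_rootSum (p' := p') (u := u) (v := v) hco hD hpar
  calc _ = ω p ^ (e * (p' * D)) * (if u = v ∧ D = 0 then (p : ℂ) ^ 2 else 0) / 4 := by
        simp only [oddPairs, unitarityTerm]
        linear_combination hsum / 2 + ω p ^ (e * (p' * D)) / 4 * h₁ -
          ω p ^ (e * (p' * D)) / 4 * h₂
    _ = _ := by
        split_ifs with h
        · simp [h.2]
        · simp

theorem pos_of_mem_SpectraSet {x : ℤ × ℤ × ℤ} (hx : x ∈ SpectraSet p p') : 0 < p ∧ 0 < p' := by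
  obtain ⟨h₁, h₂, h₃, h₄, -⟩ := hx
  omega

-- The `m` of `SpectraSet` is `t * p' - s * p` with `t = tIndex x`, so `0 ≤ m ≤ p - 1` says
-- exactly that `s = ⌊t * p' / p⌋`.
theorem mem_SpectraSet_iff (hp : 0 < p) (hp' : 0 < p') {x : ℤ × ℤ × ℤ} :
    x ∈ SpectraSet p p' ↔ (x.1, tIndex x) ∈ oddPairs p ∧ x.2.1 = tIndex x * p' / p := by
  obtain ⟨r, s, θ⟩ := x
  simp only [SpectraSet, Set.mem_ofPred_eq, oddPairs, mem_filter, mem_product, mem_Ico, tIndex,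
    eq_comm (a := s), Int.ediv_eq_iff_of_pos hp]
  have hodd : Odd (r + (r - 2 * θ - 1)) := ⟨r - θ - 1, by ring⟩
  constructor
  · rintro ⟨hr1, hr2, hs1, hs2, m, hm1, hm2, hm⟩
    have hsp : s * p ≤ (p' - 1) * p := mul_le_mul_of_nonneg_right (by omega) hp.le
    refine ⟨⟨⟨⟨hr1, by omega⟩, ?_, ?_⟩, hodd⟩, by linarith, by linarith⟩
    · nlinarith
    · nlinarith
  · rintro ⟨⟨⟨⟨hr1, hr2⟩, ht1, ht2⟩, -⟩, hs1, hs2⟩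
    have htp : (r - 2 * θ - 1) * p' ≤ (p - 1) * p' :=
      mul_le_mul_of_nonneg_right (by omega) hp'.le
    refine ⟨hr1, by omega, ?_, ?_, (r - 2 * θ - 1) * p' - s * p, by linarith, by linarith, by ring⟩
    · nlinarith
    · nlinarith

theorem mem_Ico_of_mem_SpectraSet {x : ℤ × ℤ × ℤ} (hx : x ∈ SpectraSet p p') :
    x.1 ∈ Ico 1 p ∧ tIndex x ∈ Ico 0 p := by
  obtain ⟨hp, hp'⟩ := pos_of_mem_SpectraSet hx
  have h := ((mem_SpectraSet_iff hp hp').1 hx).1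
  simp only [oddPairs, mem_filter, mem_product] at h
  exact h.1

theorem tIndex_mk {r t : ℤ} (h : Odd (r + t)) (s : ℤ) : tIndex (r, s, (r - t - 1) / 2) = t := by
  rw [Int.odd_iff] at h
  simp only [tIndex]
  omega

def spectraEquiv (hp : 0 < p) (hp' : 0 < p') : SpectraSet p p' ≃ oddPairs p where
  toFun x := ⟨(x.1.1, tIndex x.1), ((mem_SpectraSet_iff hp hp').1 x.2).1⟩
  invFun q := ⟨(q.1.1, q.1.2 * p' / p, (q.1.1 - q.1.2 - 1) / 2), by
    rw [mem_SpectraSet_iff hp hp', tIndex_mk (mem_filter.1 q.2).2]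
    exact ⟨q.2, rfl⟩⟩
  left_inv x := by
    obtain ⟨⟨r, s, θ⟩, hx⟩ := x
    have hs := ((mem_SpectraSet_iff hp hp').1 hx).2
    simp only [tIndex] at hs ⊢
    ext <;> dsimp only <;> omega
  right_inv q := by
    obtain ⟨⟨r, t⟩, hq⟩ := q
    ext
    · rfl
    · exact tIndex_mk (mem_filter.1 hq).2 _

theorem tsum_SpectraSet_eq_sum_oddPairs (hp : 0 < p) (hp' : 0 < p') (F : ℤ × ℤ → ℂ) :
    ∑' x : SpectraSet p p', F (x.1.1, tIndex x.1) = ∑ q ∈ oddPairs p, F q := by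
  rw [← Finset.tsum_subtype]
  exact (spectraEquiv hp hp').tsum_eq fun q => F q.1

theorem eq_iff_of_mem_SpectraSet {x y : ℤ × ℤ × ℤ} (hx : x ∈ SpectraSet p p')
    (hy : y ∈ SpectraSet p p') : x = y ↔ x.1 = y.1 ∧ tIndex x = tIndex y := by
  obtain ⟨hp, hp'⟩ := pos_of_mem_SpectraSet hx
  have := (spectraEquiv hp hp').injective.eq_iff (a := ⟨x, hx⟩) (b := ⟨y, hy⟩)
  simpa [spectraEquiv, Prod.ext_iff] using this.symm

theorem comm (ε ε' : ℕ) (x y : ℤ × ℤ × ℤ) : Saa p p' ε ε' x y = Saa p p' ε' ε y x := by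
  unfold Saa
  ring_nf

theorem exp_mul_conj_exp (ε ε' : ℕ) (x y z : ℤ × ℤ × ℤ) :
    exp (π * I * (p' / p) * ((x.1 : ℂ) - 2 * x.2.2 - 1 + ε) * ((z.1 : ℂ) - 2 * z.2.2 - 1 + ε')) *
      conj (exp (π * I * (p' / p) * ((z.1 : ℂ) - 2 * z.2.2 - 1 + ε') *
        ((y.1 : ℂ) - 2 * y.2.2 - 1 + ε))) =
      ω p ^ ((tIndex z + ε') * (p' * (tIndex x - tIndex y))) := by
  rw [← exp_conj, ← exp_add, ω_zpow]
  simp only [map_mul, map_div₀, map_sub, map_add, map_ofNat, map_one, conj_ofReal, conj_I,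
    map_intCast, map_natCast, tIndex]
  push_cast
  ring_nf

theorem mul_conj_eq (ε ε' : ℕ) (x y z : ℤ × ℤ × ℤ) :
    Saa p p' ε ε' x z * conj (Saa p p' ε' ε z y) =
      (-1) ^ ((1 - (ε' : ℤ)) * (x.2.1 + y.2.1)) * (4 / (p : ℂ) ^ 2) *
        unitarityTerm p p' x.1 y.1 ε' (tIndex x - tIndex y) (z.1, tIndex z) := by
  have hI : I ^ (-((ε : ℤ) * ε')) * conj (I ^ (-((ε' : ℤ) * ε))) = 1 := by
    rw [mul_comm (ε' : ℤ), Complex.mul_conj, map_zpow₀, normSq_I, one_zpow, ofReal_one]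
  have hsign : (-1 : ℂ) ^ ((1 - (ε' : ℤ)) * x.2.1 + (1 - ε) * z.2.1) *
      conj ((-1) ^ ((1 - (ε : ℤ)) * z.2.1 + (1 - ε') * y.2.1)) =
      (-1) ^ ((1 - (ε' : ℤ)) * (x.2.1 + y.2.1)) := by
    rw [map_zpow₀, map_neg, map_one, ← zpow_add₀ (by norm_num),
      show (1 - (ε' : ℤ)) * x.2.1 + (1 - ε) * z.2.1 + ((1 - ε) * z.2.1 + (1 - ε') * y.2.1) =
        (1 - ε') * (x.2.1 + y.2.1) + 2 * ((1 - ε) * z.2.1) by ring,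
      zpow_add₀ (by norm_num), zpow_mul (-1 : ℂ) 2]
    norm_num
  trans (I ^ (-((ε : ℤ) * ε')) * conj (I ^ (-((ε' : ℤ) * ε)))) *
      ((-1 : ℂ) ^ ((1 - (ε' : ℤ)) * x.2.1 + (1 - ε) * z.2.1) *
        conj ((-1) ^ ((1 - (ε : ℤ)) * z.2.1 + (1 - ε') * y.2.1))) *
      (2 / (p : ℂ) * conj (2 / (p : ℂ))) *
      ((Real.sin (π * ((p' : ℝ) / p) * x.1 * z.1) *
        Real.sin (π * ((p' : ℝ) / p) * z.1 * y.1) : ℝ) : ℂ) *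
      (exp (π * I * (p' / p) * ((x.1 : ℂ) - 2 * x.2.2 - 1 + ε) *
        ((z.1 : ℂ) - 2 * z.2.2 - 1 + ε')) *
      conj (exp (π * I * (p' / p) * ((z.1 : ℂ) - 2 * z.2.2 - 1 + ε') *
        ((y.1 : ℂ) - 2 * y.2.2 - 1 + ε))))
  · simp only [Saa, map_mul, conj_ofReal]
    push_cast
    ring
  · rw [hI, hsign, exp_mul_conj_exp, map_div₀, map_ofNat, map_intCast, unitarityTerm]
    ring

end Saa

open Saa in
theorem Saa_symmetric_unitary_general (p p' : ℤ)
    (hco : IsCoprime p p') (ε ε' : ℕ)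
    (x y : ℤ × ℤ × ℤ) (hx : x ∈ SpectraSet p p') (hy : y ∈ SpectraSet p p') :
    Saa p p' ε ε' x y = Saa p p' ε' ε y x ∧
    (∑' z : SpectraSet p p', Saa p p' ε ε' x z.1 * (starRingEnd ℂ) (Saa p p' ε' ε z.1 y)) =
      if x = y then 1 else 0 := by
  obtain ⟨hp, hp'⟩ := pos_of_mem_SpectraSet hx
  obtain ⟨hxr, hxt⟩ := mem_Ico_of_mem_SpectraSet hx
  obtain ⟨hyr, hyt⟩ := mem_Ico_of_mem_SpectraSet hy
  have hD : |tIndex x - tIndex y| < p := by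
    rw [mem_Ico] at hxt hyt
    exact abs_lt.2 ⟨by omega, by omega⟩
  have hpar : Even (x.1 + y.1 + (tIndex x - tIndex y)) :=
    ⟨x.1 - x.2.2 + y.2.2, by simp only [tIndex]; ring⟩
  refine ⟨comm ε ε' x y, ?_⟩
  simp_rw [mul_conj_eq, tsum_mul_left]
  rw [tsum_SpectraSet_eq_sum_oddPairs hp hp', sum_oddPairs_unitarityTerm hco hxr hyr hD hpar]
  by_cases hxy : x = y
  · subst hxy
    have hsign : (-1 : ℂ) ^ ((1 - (ε' : ℤ)) * (x.2.1 + x.2.1)) = 1 :=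
      Even.neg_one_zpow ⟨(1 - ε') * x.2.1, by ring⟩
    have hp0 : (p : ℂ) ≠ 0 := Int.cast_ne_zero.2 hp.ne'
    rw [if_pos ⟨rfl, sub_self _⟩, if_pos rfl, hsign]
    field_simp
  · rw [if_neg hxy, if_neg (by rwa [sub_eq_zero, ← eq_iff_of_mem_SpectraSet hx hy]), mul_zero]

/-- Symmetry and unitarity of the atypical S-data. -/
theorem Saa_symmetric_unitary (p p' : ℤ) (hp : 2 ≤ p) (hp' : 1 ≤ p')
    (hco : IsCoprime p p') (ε ε' : ℕ) (hε : ε ≤ 1) (hε' : ε' ≤ 1)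
    (x y : ℤ × ℤ × ℤ) (hx : x ∈ SpectraSet p p') (hy : y ∈ SpectraSet p p') :
    Saa p p' ε ε' x y = Saa p p' ε' ε y x ∧
    (∑' z : SpectraSet p p', Saa p p' ε ε' x z.1 * (starRingEnd ℂ) (Saa p p' ε' ε z.1 y)) =
      if x = y then 1 else 0 :=
  Saa_symmetric_unitary_general p p' hco ε ε' x y hx hy
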